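/- arXiv:2004.00604 — 2 statements merged into one kernel-verified Lean document; each statement's English description precedes it below -/
import Mathlib

section
/- Let S be an ∞-orthogonal collection of D^b(kQ) contained in the fundamental domain F_{−w}. Then: (1) the set {F^n s : n ∈ ℤ, s ∈ S} is an orthogonal collection in D^b(kQ), i.e. Hom(F^m s₁, F^n s₂) = 0 whenever (m,s₁) ≠ (n,s₂) and End(F^n s) ≅ k for all n ∈ ℤ and s ∈ S; (2) for all k ≥ 1 one has Ext¹_{D^b(kQ)}(S, F^k S) = Hom_{D^b(kQ)}(S, Σ F^k S) = 0. -/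
namespace Paper

open CategoryTheory Limits Pretriangulated Opposite

universe w v u v' u'

variable (k : Type w) [Field k]
variable (D : Type u) [Category.{v} D] [Preadditive D] [HasZeroObject D]
  [HasShift D ℤ] [∀ n : ℤ, (CategoryTheory.shiftFunctor D n).Additive] [Pretriangulated D]
  [CategoryTheory.Linear k D]

/-- `D` is Hom-finite over `k`. -/
def HomFinite : Prop := ∀ x y : D, FiniteDimensional k (x ⟶ y)

/-- `D` is Krull-Schmidt: every object is a finite biproduct of objects with
local endomorphism rings. -/
def KrullSchmidt [HasFiniteBiproducts D] : Prop :=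
  ∀ x : D, ∃ (n : ℕ) (f : Fin n → D),
    (∀ i, IsLocalRing (End (f i))) ∧ Nonempty (x ≅ ⨁ f)

variable {k D}

/-- `A * B`: objects `d` admitting a distinguished triangle `a → d → b → Σ a`
with `a ∈ A`, `b ∈ B`. -/
def star (A B : Set D) : Set D :=
  {d | ∃ (a b : D) (f : a ⟶ d) (g : d ⟶ b) (h : b ⟶ a⟦(1 : ℤ)⟧),
    a ∈ A ∧ b ∈ B ∧ Triangle.mk f g h ∈ distTriang D}

/-- closure under retracts (in particular under isomorphisms and direct summands) -/
def IsClosedUnderRetracts (A : Set D) : Prop :=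
  ∀ ⦃x y : D⦄ (i : x ⟶ y) (r : y ⟶ x), i ≫ r = 𝟙 x → y ∈ A → x ∈ A

/-- `A⊥`: objects receiving no nonzero morphism from `A`. -/
def rightPerp (A : Set D) : Set D := {d | ∀ x ∈ A, ∀ f : x ⟶ d, f = 0}

/-- `⊥A`: objects admitting no nonzero morphism to `A`. -/
def leftPerp (A : Set D) : Set D := {d | ∀ x ∈ A, ∀ f : d ⟶ x, f = 0}

/-- `Σⁿ A` (for `A` closed under isomorphisms). -/
def shiftSet (n : ℤ) (A : Set D) : Set D := {d | d⟦(-n)⟧ ∈ A}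

/-- A t-structure on `D`: a pair of full subcategories closed under direct summands
with `Hom(X,Y) = 0`, `D = X * Y` and `Σ X ⊆ X`. -/
structure IsTStructure (X Y : Set D) : Prop where
  retractX : IsClosedUnderRetracts X
  retractY : IsClosedUnderRetracts Y
  homZero : ∀ x ∈ X, ∀ y ∈ Y, ∀ f : x ⟶ y, f = 0
  decomp : ∀ d : D, d ∈ star X Y
  shiftX : ∀ x ∈ X, x⟦(1 : ℤ)⟧ ∈ X

/-- A co-t-structure on `D`: as above but with `Σ⁻¹ X ⊆ X`. -/
structure IsCoTStructure (X Y : Set D) : Prop where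
  retractX : IsClosedUnderRetracts X
  retractY : IsClosedUnderRetracts Y
  homZero : ∀ x ∈ X, ∀ y ∈ Y, ∀ f : x ⟶ y, f = 0
  decomp : ∀ d : D, d ∈ star X Y
  shiftX : ∀ x ∈ X, x⟦(-1 : ℤ)⟧ ∈ X

/-- boundedness of a (co-)t-structure -/
def IsBounded (X Y : Set D) : Prop :=
  ∀ d : D, (∃ n : ℤ, d⟦n⟧ ∈ X) ∧ (∃ n : ℤ, d⟦n⟧ ∈ Y)

/-- the heart `H = X ∩ Σ Y` of a t-structure `(X,Y)` -/
def heart (X Y : Set D) : Set D := {d | d ∈ X ∧ d⟦(-1 : ℤ)⟧ ∈ Y}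

/-- `f : a ⟶ d` is a right `A`-approximation of `d`. -/
def IsRightApprox (A : Set D) {a d : D} (f : a ⟶ d) : Prop :=
  a ∈ A ∧ ∀ a' ∈ A, ∀ g : a' ⟶ d, ∃ h : a' ⟶ a, h ≫ f = g

/-- `f : d ⟶ a` is a left `A`-approximation of `d`. -/
def IsLeftApprox (A : Set D) {d a : D} (f : d ⟶ a) : Prop :=
  a ∈ A ∧ ∀ a' ∈ A, ∀ g : d ⟶ a', ∃ h : a ⟶ a', f ≫ h = g

/-- `A` is contravariantly finite in (the full subcategory) `B`. -/
def ContravariantlyFiniteIn (A B : Set D) : Prop :=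
  ∀ d ∈ B, ∃ (a : D) (f : a ⟶ d), IsRightApprox A f

/-- `A` is covariantly finite in `B`. -/
def CovariantlyFiniteIn (A B : Set D) : Prop :=
  ∀ d ∈ B, ∃ (a : D) (f : d ⟶ a), IsLeftApprox A f

def ContravariantlyFinite (A : Set D) : Prop := ContravariantlyFiniteIn A Set.univ
def CovariantlyFinite (A : Set D) : Prop := CovariantlyFiniteIn A Set.univ
def FunctoriallyFinite (A : Set D) : Prop :=
  ContravariantlyFinite A ∧ CovariantlyFinite A

/-- the projective coheart `S = ⊥(ΣX) ∩ X` of a t-structure -/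
def projCoheart (X : Set D) : Set D :=
  {d | d ∈ X ∧ ∀ x ∈ X, ∀ f : d ⟶ x⟦(1 : ℤ)⟧, f = 0}

/-- the injective coheart `C = Y⊥ ∩ ΣY` of a t-structure -/
def injCoheart (Y : Set D) : Set D :=
  {d | d⟦(-1 : ℤ)⟧ ∈ Y ∧ ∀ y ∈ Y, ∀ f : y ⟶ d, f = 0}

/-- `(X,Y)` has enough Ext-injectives: the injective coheart is covariantly finite in
`ΣY` and `⊥C ∩ H = 0`. -/
def HasEnoughExtInjectives (X Y : Set D) : Prop :=
  CovariantlyFiniteIn (injCoheart Y) (shiftSet 1 Y) ∧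
  ∀ d ∈ leftPerp (injCoheart Y), d ∈ heart X Y → IsZero d

/-- `(X,Y)` has enough Ext-projectives: the projective coheart is contravariantly finite
in `X` and `S⊥ ∩ H = 0`. -/
def HasEnoughExtProjectives (X Y : Set D) : Prop :=
  ContravariantlyFiniteIn (projCoheart X) X ∧
  ∀ d ∈ rightPerp (projCoheart X), d ∈ heart X Y → IsZero d

/-- `e` is an injective object of the heart: `e ∈ H` and `Ext¹_H(-,e) = Hom_D(-, Σe)|_H = 0`. -/
def heartInjective (X Y : Set D) (e : D) : Prop :=
  e ∈ heart X Y ∧ ∀ h ∈ heart X Y, ∀ f : h ⟶ e⟦(1 : ℤ)⟧, f = 0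

/-- `p` is a projective object of the heart: `p ∈ H` and `Ext¹_H(p,-) = Hom_D(p, Σ(-))|_H = 0`. -/
def heartProjective (X Y : Set D) (p : D) : Prop :=
  p ∈ heart X Y ∧ ∀ h ∈ heart X Y, ∀ f : p ⟶ h⟦(1 : ℤ)⟧, f = 0

/-- `f : a ⟶ b` (with `a, b ∈ H`) is a monomorphism in `H`: its cone lies in `H`,
i.e. `f` fits in a short exact sequence `0 → a → b → c → 0` of `H`. -/
def heartMono (X Y : Set D) {a b : D} (f : a ⟶ b) : Prop :=
  ∃ (c : D) (g : b ⟶ c) (h : c ⟶ a⟦(1 : ℤ)⟧),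
    c ∈ heart X Y ∧ Triangle.mk f g h ∈ distTriang D

/-- `f : a ⟶ b` (with `a, b ∈ H`) is an epimorphism in `H`: its cocone lies in `H`. -/
def heartEpi (X Y : Set D) {a b : D} (f : a ⟶ b) : Prop :=
  ∃ (c : D) (g : c ⟶ a) (h : b ⟶ c⟦(1 : ℤ)⟧),
    c ∈ heart X Y ∧ Triangle.mk g f h ∈ distTriang D

/-- the heart has enough injectives -/
def HeartHasEnoughInjectives (X Y : Set D) : Prop :=
  ∀ h ∈ heart X Y, ∃ (e : D) (f : h ⟶ e), heartInjective X Y e ∧ heartMono X Y f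

/-- the heart has enough projectives -/
def HeartHasEnoughProjectives (X Y : Set D) : Prop :=
  ∀ h ∈ heart X Y, ∃ (p : D) (f : p ⟶ h), heartProjective X Y p ∧ heartEpi X Y f

/-- `h₀ = H⁰(c)` for `c ∈ ΣY`: there is a truncation triangle `h₀ → c → y → Σh₀`
with `h₀ ∈ H` and `y ∈ Y`. -/
def IsH0ofCoaisle (X Y : Set D) (c h₀ : D) : Prop :=
  h₀ ∈ heart X Y ∧ ∃ (g : h₀ ⟶ c) (y : D) (u : c ⟶ y) (e : y ⟶ h₀⟦(1 : ℤ)⟧),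
    y ∈ Y ∧ Triangle.mk g u e ∈ distTriang D

/-- `h₀ = H⁰(s)` for `s ∈ X`: there is a truncation triangle `x → s → h₀ → Σx`
with `x ∈ ΣX` and `h₀ ∈ H`. -/
def IsH0ofAisle (X Y : Set D) (s h₀ : D) : Prop :=
  h₀ ∈ heart X Y ∧ ∃ (x : D) (f : x ⟶ s) (g : s ⟶ h₀) (e : h₀ ⟶ x⟦(1 : ℤ)⟧),
    x⟦(-1 : ℤ)⟧ ∈ X ∧ Triangle.mk f g e ∈ distTriang D

/-- indecomposable object -/
def Indec (x : D) : Prop :=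
  ¬ IsZero x ∧ ∀ f : x ⟶ x, f ≫ f = f → f = 0 ∨ f = 𝟙 x

/-- extension-closed subcategory (containing the zero objects) -/
def IsExtClosed (A : Set D) : Prop :=
  (∀ x : D, IsZero x → x ∈ A) ∧ star A A ⊆ A

/-- the extension closure `⟨S⟩` of a collection `S` -/
def extClosure (S : Set D) : Set D := ⋂₀ {A : Set D | S ⊆ A ∧ IsExtClosed A}

/-- thick subcategory -/
def IsThick (A : Set D) : Prop :=
  (∀ x : D, IsZero x → x ∈ A) ∧ star A A ⊆ A ∧ IsClosedUnderRetracts A ∧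
  (∀ x ∈ A, ∀ m : ℤ, x⟦m⟧ ∈ A)

/-- the thick subcategory generated by `S` -/
def thickClosure (S : Set D) : Set D := ⋂₀ {A : Set D | S ⊆ A ∧ IsThick A}

/-- the suspended closure `susp S`: smallest extension-closed subcategory containing `S`
closed under `Σ` -/
def suspClosure (S : Set D) : Set D :=
  ⋂₀ {A : Set D | S ⊆ A ∧ IsExtClosed A ∧ ∀ x ∈ A, x⟦(1 : ℤ)⟧ ∈ A}

/-- the cosuspended closure `cosusp S` -/
def cosuspClosure (S : Set D) : Set D :=
  ⋂₀ {A : Set D | S ⊆ A ∧ IsExtClosed A ∧ ∀ x ∈ A, x⟦(-1 : ℤ)⟧ ∈ A}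

variable (k) in
/-- orthogonal collection: `dim_k Hom(x,y) = δ_{x,y}` for `x, y ∈ S` -/
def IsOrthogonal (S : Set D) : Prop :=
  (∀ x ∈ S, ∀ y ∈ S, x ≠ y → ∀ f : x ⟶ y, f = 0) ∧
  (∀ x ∈ S, ∀ f : x ⟶ x, ∃ c : k, f = c • 𝟙 x) ∧
  (∀ x ∈ S, 𝟙 x ≠ 0)

variable (k) in
/-- `∞`-orthogonal collection: orthogonal and `Hom(Σᵐ x, y) = 0` for all `m ≥ 1` -/
def IsInfOrthogonal (S : Set D) : Prop :=
  IsOrthogonal k S ∧ ∀ x ∈ S, ∀ y ∈ S, ∀ m : ℤ, 1 ≤ m → ∀ f : x⟦m⟧ ⟶ y, f = 0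

variable (k) in
/-- `w`-orthogonal collection: orthogonal and `Hom(Σᵐ x, y) = 0` for `1 ≤ m ≤ w - 1` -/
def IsWOrthogonal (w : ℕ) (S : Set D) : Prop :=
  IsOrthogonal k S ∧
  ∀ x ∈ S, ∀ y ∈ S, ∀ m : ℤ, 1 ≤ m → m ≤ (w : ℤ) - 1 → ∀ f : x⟦m⟧ ⟶ y, f = 0

variable (k) in
/-- simple-minded collection -/
def IsSMC (S : Set D) : Prop :=
  IsInfOrthogonal k S ∧ ∀ d : D, d ∈ thickClosure S

/-- `Σ⁻¹ A` as an image -/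
def shiftNegOne (A : Set D) : Set D := (fun a : D => a⟦(-1 : ℤ)⟧) '' A

/-- `⟨A⟩ * Σ⁻¹⟨A⟩ * ⋯ * Σ^{1-w}⟨A⟩` (with `w` factors) -/
def smsFilt (A : Set D) : ℕ → Set D
  | 0 => {d | IsZero d}
  | (l + 1) => star (extClosure A) (shiftNegOne (smsFilt A l))

variable (k) in
/-- `w`-simple-minded system -/
def IsWSMS (w : ℕ) (A : Set D) : Prop :=
  IsWOrthogonal k w A ∧ ∀ d : D, d ∈ smsFilt A w

variable (k) in
/-- `∞`-Riedtmann configuration: `∞`-orthogonal and `⊥(Σ^{<0} S) ∩ (Σ^{≥0} S)⊥ = 0` -/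
def IsInfRiedtmann (S : Set D) : Prop :=
  IsInfOrthogonal k S ∧
  ∀ d : D, (∀ s ∈ S, ∀ m : ℤ, m < 0 → ∀ f : d ⟶ s⟦m⟧, f = 0) →
    (∀ s ∈ S, ∀ m : ℤ, 0 ≤ m → ∀ f : s⟦m⟧ ⟶ d, f = 0) → IsZero d

variable (k) in
/-- `w`-Riedtmann configuration: `w`-orthogonal, `⋂_{0 ≤ m ≤ w-1} (Σᵐ S)⊥ = 0` and
`⋂_{0 ≤ m ≤ w-1} ⊥(Σ⁻ᵐ S) = 0` -/
def IsWRiedtmann (w : ℕ) (S : Set D) : Prop :=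
  IsWOrthogonal k w S ∧
  (∀ d : D, (∀ m : ℕ, m ≤ w - 1 → ∀ s ∈ S, ∀ f : s⟦(m : ℤ)⟧ ⟶ d, f = 0) → IsZero d) ∧
  (∀ d : D, (∀ m : ℕ, m ≤ w - 1 → ∀ s ∈ S, ∀ f : d ⟶ s⟦-(m : ℤ)⟧, f = 0) → IsZero d)

end Paper

namespace Paper

open CategoryTheory Limits Pretriangulated Opposite

universe w v u

variable {k : Type w} [Field k] [IsAlgClosed k]
variable {D : Type u} [Category.{v} D] [Preadditive D] [HasZeroObject D]
  [HasShift D ℤ] [∀ n : ℤ, (CategoryTheory.shiftFunctor D n).Additive] [Pretriangulated D]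
  [CategoryTheory.Linear k D] [HasFiniteBiproducts D]

/-- a simple object of the heart: nonzero, and with no proper nontrivial subobject
(every short exact sequence `0 → a → s → b → 0` in `H` has `a = 0` or `b = 0`) -/
def heartSimple (X Y : Set D) (s : D) : Prop :=
  s ∈ heart X Y ∧ ¬ IsZero s ∧
  ∀ (a b : D) (f : a ⟶ s) (g : s ⟶ b) (h : b ⟶ a⟦(1 : ℤ)⟧),
    a ∈ heart X Y → b ∈ heart X Y → (Triangle.mk f g h ∈ distTriang D) →
    IsZero a ∨ IsZero b

/-- iterated star product: `A * A * ⋯ * A` (`n` factors, starting from zero objects) -/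
def iterStar (A : Set D) : ℕ → Set D
  | 0 => {d | IsZero d}
  | (n + 1) => star A (iterStar A n)

/-- an algebraic t-structure: a bounded t-structure whose heart is a length category
(every object has a finite composition series) with finitely many simple objects
up to isomorphism -/
def IsAlgebraicTStructure (X Y : Set D) : Prop :=
  IsTStructure X Y ∧ IsBounded X Y ∧
  (∀ h ∈ heart X Y, ∃ n : ℕ, h ∈ iterStar {s : D | heartSimple X Y s} n) ∧
  (∃ (m : ℕ) (f : Fin m → D), ∀ s : D, heartSimple X Y s → ∃ i, Nonempty (s ≅ f i))

variable (k D) in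
/-- Axiomatization of `D^b(kQ)` for a finite acyclic quiver `Q` with `n` vertices:
a Hom-finite, Krull-Schmidt, `k`-linear triangulated category with a Serre functor
(exhibited by trace maps and perfect composition pairings), a standard bounded
t-structure `(X, Y)` with hereditary heart (`mod kQ`), in which every object splits as a
direct sum of shifts of heart objects, together with the `n` simple modules, which can be
ordered into an exceptional sequence (acyclicity of `Q`) and filter every heart object. -/
structure HereditarySetup (n : ℕ) where
  homFinite : HomFinite k D
  krullSchmidt : KrullSchmidt D
  /-- the Serre functor `𝕊` -/
  serreF : D ⥤ D
  serre_additive : serreF.Additive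
  serre_equivalence : serreF.IsEquivalence
  /-- the trace maps of Serre duality -/
  tr : ∀ x : D, (x ⟶ serreF.obj x) →ₗ[k] k
  /-- Serre duality: the pairing `Hom(x,y) × Hom(y,𝕊x) → k` is perfect -/
  serre_duality : ∀ (x y : D) (φ : (y ⟶ serreF.obj x) →ₗ[k] k),
    ∃! f : x ⟶ y, ∀ g : y ⟶ serreF.obj x, tr x (f ≫ g) = φ g
  /-- the aisle of the standard t-structure -/
  X : Set D
  /-- the coaisle of the standard t-structure -/
  Y : Set D
  tstr : IsTStructure X Y
  bounded : IsBounded X Y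
  /-- the heart is hereditary -/
  hereditary : ∀ a ∈ heart X Y, ∀ b ∈ heart X Y, ∀ m : ℤ, m ≠ 0 → m ≠ 1 →
    ∀ f : a ⟶ b⟦m⟧, f = 0
  /-- every object is a finite direct sum of shifts of heart objects -/
  splitting : ∀ d : D, ∃ (m : ℕ) (h : Fin m → D),
    (∀ i, ∃ s : ℤ, (h i)⟦s⟧ ∈ heart X Y) ∧ Nonempty (d ≅ ⨁ h)
  /-- the simple modules -/
  simples : Fin n → D
  simples_simple : ∀ i, heartSimple X Y (simples i)
  simples_nonIso : ∀ i j, i ≠ j → IsEmpty (simples i ≅ simples j)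
  simples_complete : ∀ s : D, heartSimple X Y s → ∃ i, Nonempty (s ≅ simples i)
  /-- `(simples 0, …, simples (n-1))` is an exceptional sequence -/
  simples_exceptional : ∀ i j : Fin n, j < i → ∀ m : ℤ,
    ∀ f : simples i ⟶ (simples j)⟦m⟧, f = 0
  finiteLength : ∀ h ∈ heart X Y, ∃ m : ℕ, h ∈ iterStar {s : D | heartSimple X Y s} m

namespace HereditarySetup

variable {n : ℕ} (HS : HereditarySetup k D n)

/-- the autoequivalence `F = Σ^w ∘ 𝕊` -/
def F (w : ℕ) : D ⥤ D := HS.serreF ⋙ CategoryTheory.shiftFunctor D (w : ℤ)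

/-- the fundamental domain `F_{-w} = X ∩ Σ^w 𝕊 Y` -/
def fd (w : ℕ) : Set D :=
  {d | d ∈ HS.X ∧ ∃ y ∈ HS.Y,
    Nonempty (d ≅ (CategoryTheory.shiftFunctor D (w : ℤ)).obj (HS.serreF.obj y))}

end HereditarySetup

/-- the family of powers `Fᵐ`, `m ∈ ℤ`, of the autoequivalence `F = Σ^w ∘ 𝕊` -/
structure FPowData {n : ℕ} (HS : HereditarySetup k D n) (w : ℕ) where
  pow : ℤ → D ⥤ D
  pow_zero : pow 0 ≅ 𝟭 D
  pow_succ : ∀ m : ℤ, pow (m + 1) ≅ pow m ⋙ HS.F w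

/-- the image `Fᵐ S` of a collection `S` -/
def powImage (pw : ℤ → D ⥤ D) (S : Set D) (m : ℤ) : Set D :=
  (fun d => (pw m).obj d) '' S

/-- `⟨Fᵐ S⟩ * ⟨F^{m+1} S⟩ * ⋯ * ⟨F^{m+l} S⟩` -/
def chainStar (pw : ℤ → D ⥤ D) (S : Set D) : ℕ → ℤ → Set D
  | 0, m => extClosure (powImage pw S m)
  | (l + 1), m => star (extClosure (powImage pw S m)) (chainStar pw S l (m + 1))

/-- `E_S = ⟨Fᵐ S ∣ m ∈ ℤ⟩`, the extension closure of all `F`-powers of `S` -/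
def bigES (pw : ℤ → D ⥤ D) (S : Set D) : Set D :=
  extClosure {d | ∃ (m : ℤ) (s : D), s ∈ S ∧ d = (pw m).obj s}

/-!
Since `F` is an autoequivalence, `Hom(Fᵐ s, Fᵐ' s') ≅ Hom(s, Fᵈ s')` with `d = m' - m`.
For `d < 0` this vanishes because `s' ∈ F Y` and `F⁻¹` preserves the coaisle, so `Fᵈ s' ∈ Y`
while `s ∈ X`. For `d > 0` write `Fᵈ s' = Σʲ 𝕊 u` with `u = Fᵈ⁻¹ s'` and `j = w` (or `j = w + 1`
for the `Ext¹` claim): by Serre duality it suffices that `Hom(u, Σ⁻ʲ s) = 0`, which is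
`∞`-orthogonality when `d = 1`, and holds for `d ≥ 2` because `w ≥ 1` puts `u` in `ΣX` while
`s ∈ Σ^w 𝕊 Y` puts `Σ⁻ʲ s` in `ΣY`. Behind this are the estimates `𝕊 X ⊆ X` (a summand of
`𝕊 x` lying in `Y` has zero inclusion map, being Serre dual to `Hom(x, Y) = 0`) and `𝕊 Y ⊆ Σ Y`
(Serre dual to `Hom(Y, ΣX) = 0`, which holds because every object splits into shifted heart
objects and the heart is hereditary).

`F` need not be `k`-linear, so it only identifies `End(Fᵐ s)` with `End s ≅ k` as rings; this
still makes `End(Fᵐ s)` a finite-dimensional domain over the algebraically closed `k`, hence `k`.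
-/

lemma IsClosedUnderRetracts.mem_of_iso {C : Type*} [Category C] {A : Set C}
    (hA : IsClosedUnderRetracts A) {a b : C} (e : a ≅ b) (hb : b ∈ A) : a ∈ A :=
  hA e.hom e.inv e.hom_inv_id hb

namespace IsTStructure

variable {C : Type*} [Category C] [Preadditive C] [HasZeroObject C] [HasShift C ℤ]
  [∀ n : ℤ, (shiftFunctor C n).Additive] [Pretriangulated C] {X Y : Set C}

lemma subsingleton_hom (h : IsTStructure X Y) {x y : C} (hx : x ∈ X) (hy : y ∈ Y) :
    Subsingleton (x ⟶ y) :=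
  subsingleton_of_forall_eq 0 (h.homZero x hx y hy)

lemma isZero_of_mem_of_mem (h : IsTStructure X Y) {d : C} (hX : d ∈ X) (hY : d ∈ Y) :
    IsZero d := by
  rw [IsZero.iff_id_eq_zero]
  exact h.homZero d hX d hY _

lemma mem_X_of_forall (h : IsTStructure X Y) {d : C}
    (hd : ∀ y ∈ Y, Subsingleton (d ⟶ y)) : d ∈ X := by
  obtain ⟨a, b, f, g, _, ha, hb, hT⟩ := h.decomp d
  obtain ⟨v, hv⟩ := Triangle.coyoneda_exact₂ _ hT (𝟙 d) (@Subsingleton.elim _ (hd b hb) _ _)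
  exact h.retractX v f hv.symm ha

lemma mem_Y_of_forall (h : IsTStructure X Y) {d : C}
    (hd : ∀ x ∈ X, Subsingleton (x ⟶ d)) : d ∈ Y := by
  obtain ⟨a, b, f, g, _, ha, hb, hT⟩ := h.decomp d
  obtain ⟨v, hv⟩ := Triangle.yoneda_exact₂ _ hT (𝟙 d) (@Subsingleton.elim _ (hd a ha) _ _)
  exact h.retractY g v hv.symm hb

lemma shift_mem_X (h : IsTStructure X Y) {x : C} (hx : x ∈ X) {n : ℤ} (hn : 0 ≤ n) :
    x⟦n⟧ ∈ X := by
  induction n, hn using Int.leInduction with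
  | base => exact h.retractX.mem_of_iso ((shiftFunctorZero C ℤ).app x) hx
  | succ n _ ih => exact h.retractX.mem_of_iso (shiftAdd x n 1) (h.shiftX _ ih)

lemma shift_neg_one_mem_Y (h : IsTStructure X Y) {y : C} (hy : y ∈ Y) : y⟦(-1 : ℤ)⟧ ∈ Y :=
  h.mem_Y_of_forall fun x hx =>
    ((shiftEquiv C (1 : ℤ)).toAdjunction.homEquiv x y).subsingleton_congr.mp
      (h.subsingleton_hom (h.shiftX x hx) hy)

lemma shift_mem_Y (h : IsTStructure X Y) {y : C} (hy : y ∈ Y) {n : ℤ} (hn : n ≤ 0) :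
    y⟦n⟧ ∈ Y := by
  induction n, hn using Int.leInductionDown with
  | base => exact h.retractY.mem_of_iso ((shiftFunctorZero C ℤ).app y) hy
  | pred n _ ih =>
    exact h.retractY.mem_of_iso (shiftAdd y n (-1)) (h.shift_neg_one_mem_Y ih)

lemma shift_mem_X_of_le (h : IsTStructure X Y) {x : C} {a b : ℤ} (hx : x⟦a⟧ ∈ X)
    (hab : a ≤ b) : x⟦b⟧ ∈ X :=
  h.retractX.mem_of_iso ((shiftFunctorAdd' C a (b - a) b (by omega)).app x)
    (h.shift_mem_X hx (by omega))

lemma shift_mem_Y_of_le (h : IsTStructure X Y) {y : C} {a b : ℤ} (hy : y⟦a⟧ ∈ Y)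
    (hba : b ≤ a) : y⟦b⟧ ∈ Y :=
  h.retractY.mem_of_iso ((shiftFunctorAdd' C a (b - a) b (by omega)).app y)
    (h.shift_mem_Y hy (by omega))

lemma shift_mem_Y_of_shift_mem_heart (h : IsTStructure X Y) {q : C} {t n : ℤ}
    (hq : q⟦t⟧ ∈ heart X Y) (hn : n ≤ t - 1) : q⟦n⟧ ∈ Y :=
  h.shift_mem_Y_of_le (h.retractY.mem_of_iso
    ((shiftFunctorAdd' C t (-1) (t - 1) (by omega)).app q) hq.2) hn

lemma mem_X_of_shift_mem_heart (h : IsTStructure X Y) {q : C} {t : ℤ}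
    (hq : q⟦t⟧ ∈ heart X Y) (ht : t ≤ 0) : q ∈ X :=
  h.retractX.mem_of_iso ((shiftFunctorZero C ℤ).app q).symm
    (h.shift_mem_X_of_le hq.1 ht)

lemma mem_Y_of_shift_mem_heart (h : IsTStructure X Y) {q : C} {t : ℤ}
    (hq : q⟦t⟧ ∈ heart X Y) (ht : 1 ≤ t) : q ∈ Y :=
  h.retractY.mem_of_iso ((shiftFunctorZero C ℤ).app q).symm
    (h.shift_mem_Y_of_shift_mem_heart hq (by omega))

end IsTStructure

section Linear

variable {K : Type*} [Field K] {C : Type*} [Category C] [Preadditive C] [Linear K C]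

lemma isDomain_end_of_forall_eq_smul_id {A : C} (h : ∀ f : A ⟶ A, ∃ c : K, f = c • 𝟙 A)
    (h₁ : 𝟙 A ≠ 0) : IsDomain (End A) := by
  have : Nontrivial (End A) := ⟨⟨𝟙 A, 0, h₁⟩⟩
  have hsurj : Function.Surjective (algebraMap K (End A)) := fun f => by
    obtain ⟨c, rfl⟩ := h f
    exact ⟨c, Algebra.algebraMap_eq_smul_one c⟩
  exact MulEquiv.isDomain K
    (RingEquiv.ofBijective _ ⟨(algebraMap K (End A)).injective, hsurj⟩).symm.toMulEquiv

lemma exists_eq_smul_id_of_isDomain [IsAlgClosed K] {A : C} [FiniteDimensional K (A ⟶ A)]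
    [IsDomain (End A)] (f : A ⟶ A) : ∃ c : K, f = c • 𝟙 A := by
  have : Module.Finite K (End A) := inferInstanceAs (FiniteDimensional K (A ⟶ A))
  have : Algebra.IsIntegral K (End A) := Algebra.IsIntegral.of_finite K (End A)
  obtain ⟨c, hc⟩ := (IsAlgClosed.algebraMap_bijective_of_isIntegral (k := K)).2 (show End A from f)
  exact ⟨c, hc.symm.trans (Algebra.algebraMap_eq_smul_one c)⟩

end Linear

namespace HereditarySetup

variable {K : Type*} [Field K] {C : Type*} [Category C] [Preadditive C] [HasZeroObject C]
  [HasShift C ℤ] [∀ n : ℤ, (shiftFunctor C n).Additive] [Pretriangulated C] [Linear K C]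
  [HasFiniteBiproducts C] {n : ℕ} (HS : HereditarySetup K C n)

attribute [local instance] serre_equivalence

lemma subsingleton_hom_of_summands_left {d e : C}
    (h : ∀ q, (∃ t : ℤ, q⟦t⟧ ∈ heart HS.X HS.Y) → Retract q d → Subsingleton (q ⟶ e)) :
    Subsingleton (d ⟶ e) := by
  obtain ⟨m, p, hp, ⟨φ⟩⟩ := HS.splitting d
  refine subsingleton_of_forall_eq 0 fun f => ?_
  have hφ : φ.inv ≫ f = 0 := biproduct.hom_ext' _ _ fun i =>
    @Subsingleton.elim _ (h (p i) (hp i) ⟨biproduct.ι p i ≫ φ.inv, φ.hom ≫ biproduct.π p i,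
      by simp⟩) _ _
  simpa using congrArg (φ.hom ≫ ·) hφ

lemma subsingleton_hom_of_summands_right {d e : C}
    (h : ∀ q, (∃ t : ℤ, q⟦t⟧ ∈ heart HS.X HS.Y) → Retract q e → Subsingleton (d ⟶ q)) :
    Subsingleton (d ⟶ e) := by
  obtain ⟨m, p, hp, ⟨φ⟩⟩ := HS.splitting e
  refine subsingleton_of_forall_eq 0 fun f => ?_
  have hφ : f ≫ φ.hom = 0 := biproduct.hom_ext _ _ fun i =>
    @Subsingleton.elim _ (h (p i) (hp i) ⟨biproduct.ι p i ≫ φ.inv, φ.hom ≫ biproduct.π p i,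
      by simp⟩) _ _
  simpa using congrArg (· ≫ φ.inv) hφ

lemma subsingleton_hom_serreF {a b : C} (h : Subsingleton (a ⟶ b)) :
    Subsingleton (b ⟶ HS.serreF.obj a) := by
  refine subsingleton_of_forall_eq 0 fun g => ?_
  refine (Module.forall_dual_apply_eq_zero_iff K g).mp fun φ => ?_
  obtain ⟨f, hf, -⟩ := HS.serre_duality a b φ
  rw [← hf g, Subsingleton.elim f 0, zero_comp, map_zero]

lemma subsingleton_hom_of_shift_mem_heart {a b : C} {s t : ℤ}
    (ha : a⟦s⟧ ∈ heart HS.X HS.Y) (hb : b⟦t⟧ ∈ heart HS.X HS.Y) (h₀ : s - t ≠ 0)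
    (h₁ : s - t ≠ 1) : Subsingleton (a ⟶ b) := by
  have : Subsingleton (a⟦s⟧ ⟶ (b⟦t⟧)⟦s - t⟧) :=
    subsingleton_of_forall_eq 0 (HS.hereditary _ ha _ hb _ h₀ h₁)
  rw [((Functor.FullyFaithful.ofFullyFaithful (shiftFunctor C s)).homEquiv).subsingleton_congr]
  exact (((shiftFunctorAdd' C t (s - t) s (by omega)).app b).homToEquiv).subsingleton_congr.mpr this

lemma subsingleton_hom_of_mem_Y_of_shift_mem_X {y z : C} (hy : y ∈ HS.Y)
    (hz : z⟦(-1 : ℤ)⟧ ∈ HS.X) : Subsingleton (y ⟶ z) := by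
  refine HS.subsingleton_hom_of_summands_left fun a ⟨s, ha⟩ ra => ?_
  have haY : a ∈ HS.Y := HS.tstr.retractY ra.i ra.r ra.retract hy
  rcases le_or_gt s 0 with hs | hs
  · exact ⟨(HS.tstr.isZero_of_mem_of_mem (HS.tstr.mem_X_of_shift_mem_heart ha hs) haY).eq_of_src⟩
  refine HS.subsingleton_hom_of_summands_right fun b ⟨t, hb⟩ rb => ?_
  have hbX : b⟦(-1 : ℤ)⟧ ∈ HS.X :=
    HS.tstr.retractX _ _ (rb.map (shiftFunctor C (-1 : ℤ))).retract hz
  rcases le_or_gt 0 t with ht | ht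
  · have hb0 : IsZero (b⟦(-1 : ℤ)⟧) := HS.tstr.isZero_of_mem_of_mem hbX
      (HS.tstr.shift_mem_Y_of_shift_mem_heart hb (by omega))
    exact ⟨(((shiftFunctor C (1 : ℤ)).map_isZero hb0).of_iso
      ((shiftFunctorCompIsoId C (-1 : ℤ) 1 (by omega)).app b).symm).eq_of_tgt⟩
  · exact HS.subsingleton_hom_of_shift_mem_heart ha hb (by omega) (by omega)

lemma serreF_obj_mem_X {x : C} (hx : x ∈ HS.X) : HS.serreF.obj x ∈ HS.X := by
  refine HS.tstr.mem_X_of_forall fun y hy => HS.subsingleton_hom_of_summands_left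
    fun q ⟨t, hq⟩ rq => ?_
  rcases le_or_gt t 0 with ht | ht
  · exact HS.tstr.subsingleton_hom (HS.tstr.mem_X_of_shift_mem_heart hq ht) hy
  · have hι : rq.i = 0 := @Subsingleton.elim _ (HS.subsingleton_hom_serreF
      (HS.tstr.subsingleton_hom hx (HS.tstr.mem_Y_of_shift_mem_heart hq ht))) _ _
    have hq0 : IsZero q := by rw [IsZero.iff_id_eq_zero, ← rq.retract, hι, zero_comp]
    exact ⟨hq0.eq_of_src⟩

lemma serreF_obj_shift_mem_Y {y : C} (hy : y ∈ HS.Y) :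
    (HS.serreF.obj y)⟦(-1 : ℤ)⟧ ∈ HS.Y :=
  HS.tstr.mem_Y_of_forall fun x hx =>
    ((shiftEquiv C (1 : ℤ)).toAdjunction.homEquiv x _).subsingleton_congr.mp <|
      HS.subsingleton_hom_serreF <| HS.subsingleton_hom_of_mem_Y_of_shift_mem_X hy <|
        HS.tstr.retractX.mem_of_iso ((shiftFunctorCompIsoId C (1 : ℤ) (-1) (by omega)).app x) hx

lemma subsingleton_hom_shift_serreF {s u : C} {j : ℤ} (h : Subsingleton (u ⟶ s⟦-j⟧)) :
    Subsingleton (s ⟶ (HS.serreF.obj u)⟦j⟧) :=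
  ((shiftEquiv' C (-j) j (by omega)).toAdjunction.homEquiv s _).subsingleton_congr.mp
    (HS.subsingleton_hom_serreF h)

instance (w : ℕ) : (HS.F w).IsEquivalence :=
  inferInstanceAs (HS.serreF ⋙ shiftFunctor C (w : ℤ)).IsEquivalence

variable {w : ℕ}

lemma F_obj_mem_X {x : C} (hx : x ∈ HS.X) : (HS.F w).obj x ∈ HS.X :=
  HS.tstr.shift_mem_X (HS.serreF_obj_mem_X hx) (by omega)

lemma F_obj_shift_mem_X (hw : 1 ≤ w) {x : C} (hx : x ∈ HS.X) :
    ((HS.F w).obj x)⟦(-1 : ℤ)⟧ ∈ HS.X :=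
  HS.tstr.retractX.mem_of_iso
    ((shiftFunctorAdd' C (w : ℤ) (-1) (w - 1) (by omega)).app _).symm
    (HS.tstr.shift_mem_X (HS.serreF_obj_mem_X hx) (by omega))

lemma F_obj_shift_mem_Y {y : C} (hy : y ∈ HS.Y) :
    ((HS.F w).obj y)⟦-(w : ℤ) - 1⟧ ∈ HS.Y :=
  HS.tstr.retractY.mem_of_iso
    ((shiftFunctorAdd' C (w : ℤ) (-(w : ℤ) - 1) (-1) (by omega)).app _).symm
    (HS.serreF_obj_shift_mem_Y hy)

lemma shift_mem_Y_of_mem_fd {s : C} (hs : s ∈ HS.fd w) : s⟦-(w : ℤ) - 1⟧ ∈ HS.Y := by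
  obtain ⟨-, y, hy, ⟨σ⟩⟩ := hs
  exact HS.tstr.retractY.mem_of_iso ((shiftFunctor C _).mapIso σ) (HS.F_obj_shift_mem_Y hy)

lemma mem_Y_of_F_obj_mem_Y {z : C} (hz : (HS.F w).obj z ∈ HS.Y) : z ∈ HS.Y :=
  HS.tstr.mem_Y_of_forall fun _ hx =>
    (Functor.FullyFaithful.ofFullyFaithful (HS.F w)).homEquiv.subsingleton_congr.mpr
      (HS.tstr.subsingleton_hom (HS.F_obj_mem_X hx) hz)

end HereditarySetup

namespace FPowData

variable {K : Type*} [Field K] {C : Type*} [Category C] [Preadditive C] [HasZeroObject C]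
  [HasShift C ℤ] [∀ n : ℤ, (shiftFunctor C n).Additive] [Pretriangulated C] [Linear K C]
  [HasFiniteBiproducts C] {n : ℕ} {HS : HereditarySetup K C n} {w : ℕ}
  (FP : FPowData HS w) {S : Set C}

def objSuccIso {m m' : ℤ} (h : m' = m + 1) (x : C) :
    (FP.pow m').obj x ≅ (HS.F w).obj ((FP.pow m).obj x) := by
  subst h
  exact (FP.pow_succ m).app x

lemma nonempty_fullyFaithful (m : ℤ) : Nonempty (FP.pow m).FullyFaithful := by
  induction m using Int.induction_on with
  | zero => exact ⟨(Functor.FullyFaithful.id C).ofIso FP.pow_zero.symm⟩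
  | succ i ih =>
    exact ⟨(ih.some.comp (.ofFullyFaithful (HS.F w))).ofIso (FP.pow_succ i).symm⟩
  | pred i ih =>
    have e := FP.pow_succ (-(i : ℤ) - 1)
    rw [sub_add_cancel] at e
    exact ⟨(ih.some.ofIso e).ofCompFaithful⟩

lemma nonempty_pow_add_obj_iso (m d : ℤ) (b : C) :
    Nonempty ((FP.pow (m + d)).obj b ≅ (FP.pow m).obj ((FP.pow d).obj b)) := by
  induction m using Int.induction_on with
  | zero => exact ⟨eqToIso (by rw [zero_add]; rfl) ≪≫ (FP.pow_zero.app _).symm⟩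
  | succ i ih =>
    exact ⟨FP.objSuccIso (by ring) b ≪≫ (HS.F w).mapIso ih.some ≪≫
      (FP.objSuccIso rfl _).symm⟩
  | pred i ih =>
    exact ⟨(Functor.FullyFaithful.ofFullyFaithful (HS.F w)).preimageIso <|
      (FP.objSuccIso (by ring) b).symm ≪≫ ih.some ≪≫ FP.objSuccIso (by ring) _⟩

lemma subsingleton_hom_pow_iff (m m' : ℤ) (a b : C) :
    Subsingleton ((FP.pow m).obj a ⟶ (FP.pow m').obj b) ↔
      Subsingleton (a ⟶ (FP.pow (m' - m)).obj b) := by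
  obtain ⟨e⟩ := FP.nonempty_pow_add_obj_iso m (m' - m) b
  rw [add_sub_cancel] at e
  rw [((Iso.refl _).homCongr e).subsingleton_congr]
  exact (FP.nonempty_fullyFaithful m).some.homEquiv.symm.subsingleton_congr

lemma isDomain_end_pow {a : C} [IsDomain (End a)] (m : ℤ) :
    IsDomain (End ((FP.pow m).obj a)) :=
  MulEquiv.isDomain (End a) ((FP.nonempty_fullyFaithful m).some.mulEquivEnd a).symm

lemma pow_obj_mem_X {x : C} (hx : x ∈ HS.X) {r : ℤ} (hr : 0 ≤ r) : (FP.pow r).obj x ∈ HS.X := by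
  induction r, hr using Int.leInduction with
  | base => exact HS.tstr.retractX.mem_of_iso (FP.pow_zero.app x) hx
  | succ r _ ih => exact HS.tstr.retractX.mem_of_iso (FP.objSuccIso rfl x) (HS.F_obj_mem_X ih)

lemma pow_obj_shift_mem_X (hw : 1 ≤ w) {x : C} (hx : x ∈ HS.X) {r : ℤ} (hr : 1 ≤ r) :
    ((FP.pow r).obj x)⟦(-1 : ℤ)⟧ ∈ HS.X :=
  HS.tstr.retractX.mem_of_iso ((shiftFunctor C (-1 : ℤ)).mapIso (FP.objSuccIso (by ring) x))
    (HS.F_obj_shift_mem_X hw (FP.pow_obj_mem_X hx (r := r - 1) (by omega)))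

lemma pow_obj_mem_Y {y : C} (hy : y ∈ HS.Y) {r : ℤ} (hr : r ≤ 0) : (FP.pow r).obj y ∈ HS.Y := by
  induction r, hr using Int.leInductionDown with
  | base => exact HS.tstr.retractY.mem_of_iso (FP.pow_zero.app y) hy
  | pred r _ ih =>
    exact HS.mem_Y_of_F_obj_mem_Y
      (HS.tstr.retractY.mem_of_iso (FP.objSuccIso (by ring) y).symm ih)

lemma pow_obj_mem_Y_of_mem_fd {s : C} (hs : s ∈ HS.fd w) {r : ℤ} (hr : r < 0) :
    (FP.pow r).obj s ∈ HS.Y := by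
  obtain ⟨-, y, hy, ⟨σ⟩⟩ := hs
  have σ' : s ≅ (FP.pow 1).obj y :=
    σ ≪≫ (HS.F w).mapIso (FP.pow_zero.app y).symm ≪≫ (FP.objSuccIso (by ring) y).symm
  obtain ⟨e⟩ := FP.nonempty_pow_add_obj_iso r 1 y
  exact HS.tstr.retractY.mem_of_iso ((FP.pow r).mapIso σ' ≪≫ e.symm)
    (FP.pow_obj_mem_Y hy (by omega))

lemma subsingleton_hom_shift_serreF_pow (hw : 1 ≤ w) {s s' : C} (hs : s ∈ HS.fd w)
    (hs' : s' ∈ HS.X) {j : ℤ} (hj : (w : ℤ) ≤ j) (horth : Subsingleton (s'⟦j⟧ ⟶ s)) {r : ℤ}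
    (hr : 0 ≤ r) : Subsingleton (s ⟶ (HS.serreF.obj ((FP.pow r).obj s'))⟦j⟧) := by
  refine HS.subsingleton_hom_shift_serreF ?_
  obtain rfl | hr := hr.eq_or_lt
  · exact ((FP.pow_zero.app s').homCongr (Iso.refl _)).subsingleton_congr.mpr
      (((shiftEquiv C j).toAdjunction.homEquiv s' s).subsingleton_congr.mp horth)
  · have hsY : (s⟦-j⟧)⟦(-1 : ℤ)⟧ ∈ HS.Y :=
      HS.tstr.retractY.mem_of_iso ((shiftFunctorAdd' C (-j) (-1) (-j - 1) (by omega)).app s).symm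
        (HS.tstr.shift_mem_Y_of_le (HS.shift_mem_Y_of_mem_fd hs) (by omega))
    exact (Functor.FullyFaithful.ofFullyFaithful (shiftFunctor C (-1 : ℤ))).homEquiv
      |>.subsingleton_congr.mpr
        (HS.tstr.subsingleton_hom (FP.pow_obj_shift_mem_X hw hs' (by omega)) hsY)

lemma subsingleton_hom_pow (hw : 1 ≤ w) (hS : IsInfOrthogonal K S) (hSfd : S ⊆ HS.fd w)
    {s s' : C} (hs : s ∈ S) (hs' : s' ∈ S) {d : ℤ} (hd : d ≠ 0 ∨ s ≠ s') :
    Subsingleton (s ⟶ (FP.pow d).obj s') := by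
  rcases lt_trichotomy d 0 with hd | rfl | hd
  · exact HS.tstr.subsingleton_hom (hSfd hs).1 (FP.pow_obj_mem_Y_of_mem_fd (hSfd hs') hd)
  · exact ((Iso.refl s).homCongr (FP.pow_zero.app s')).subsingleton_congr.mpr
      (subsingleton_of_forall_eq 0 (hS.1.1 s hs s' hs' (hd.resolve_left (by simp))))
  · exact ((Iso.refl s).homCongr (FP.objSuccIso (by ring) s')).subsingleton_congr.mpr
      (FP.subsingleton_hom_shift_serreF_pow hw (hSfd hs) (hSfd hs').1 le_rfl
        (subsingleton_of_forall_eq 0 (hS.2 s' hs' s hs _ (by omega))) (r := d - 1) (by omega))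

lemma subsingleton_hom_shift_pow (hw : 1 ≤ w) (hS : IsInfOrthogonal K S) (hSfd : S ⊆ HS.fd w)
    {s s' : C} (hs : s ∈ S) (hs' : s' ∈ S) {m : ℤ} (hm : 1 ≤ m) :
    Subsingleton (s ⟶ ((FP.pow m).obj s')⟦(1 : ℤ)⟧) := by
  have e : ((FP.pow m).obj s')⟦(1 : ℤ)⟧ ≅
      (HS.serreF.obj ((FP.pow (m - 1)).obj s'))⟦(w + 1 : ℤ)⟧ :=
    (shiftFunctor C (1 : ℤ)).mapIso (FP.objSuccIso (by ring) s') ≪≫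
      ((shiftFunctorAdd' C (w : ℤ) 1 (w + 1) rfl).app _).symm
  exact ((Iso.refl s).homCongr e).subsingleton_congr.mpr
    (FP.subsingleton_hom_shift_serreF_pow hw (hSfd hs) (hSfd hs').1 (by omega)
      (subsingleton_of_forall_eq 0 (hS.2 s' hs' s hs _ (by omega))) (by omega))

end FPowData

/-- Lemma 4.2 of the paper. -/
theorem statement_7 {n : ℕ} (HS : HereditarySetup k D n) (w : ℕ) (hw : 1 ≤ w)
    (FP : FPowData HS w)
    (S : Set D) (hS : IsInfOrthogonal k S) (hSfd : S ⊆ HS.fd w) :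
    -- (1) `{Fᵐ s ∣ m ∈ ℤ, s ∈ S}` is an orthogonal collection
    ((∀ (m m' : ℤ) (s s' : D), s ∈ S → s' ∈ S → (m ≠ m' ∨ s ≠ s') →
        ∀ f : (FP.pow m).obj s ⟶ (FP.pow m').obj s', f = 0) ∧
      (∀ (m : ℤ) (s : D), s ∈ S →
        ∀ f : (FP.pow m).obj s ⟶ (FP.pow m).obj s,
          ∃ c : k, f = c • 𝟙 ((FP.pow m).obj s)) ∧
      (∀ (m : ℤ) (s : D), s ∈ S → 𝟙 ((FP.pow m).obj s) ≠ 0)) ∧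
    -- (2) `Ext¹(S, Fᵐ S) = Hom(S, Σ Fᵐ S) = 0` for all `m ≥ 1`
    (∀ m : ℤ, 1 ≤ m → ∀ s ∈ S, ∀ s' ∈ S,
      ∀ f : s ⟶ ((FP.pow m).obj s')⟦(1 : ℤ)⟧, f = 0) := by
  have hdomain (m : ℤ) {s : D} (hs : s ∈ S) : IsDomain (End ((FP.pow m).obj s)) :=
    have := isDomain_end_of_forall_eq_smul_id (hS.1.2.1 s hs) (hS.1.2.2 s hs)
    FP.isDomain_end_pow m
  refine ⟨⟨fun m m' s s' hs hs' hne f => ?_, fun m s hs f => ?_, fun m s hs => ?_⟩,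
    fun m hm s hs s' hs' f => ?_⟩
  · have := (FP.subsingleton_hom_pow_iff m m' s s').mpr <|
      FP.subsingleton_hom_pow hw hS hSfd hs hs' (hne.imp_left fun h => sub_ne_zero.mpr h.symm)
    exact Subsingleton.elim f 0
  · have := hdomain m hs
    have := HS.homFinite ((FP.pow m).obj s) ((FP.pow m).obj s)
    exact exists_eq_smul_id_of_isDomain f
  · have := hdomain m hs
    exact one_ne_zero (α := End ((FP.pow m).obj s))
  · have := FP.subsingleton_hom_shift_pow hw hS hSfd hs hs' hm
    exact Subsingleton.elim f 0

end Paper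
end

section
/- Let S be an ∞-orthogonal collection of D^b(kQ) contained in the fundamental domain F_{−w}. Then for all n ≥ 1, ⟨F^n S⟩ * ⟨S⟩ ⊆ ⟨S⟩ * ⟨F^n S⟩, where ⟨−⟩ denotes extension closure in D^b(kQ); indeed every object of ⟨F^n S⟩ * ⟨S⟩ is a direct sum of an object of ⟨S⟩ and an object of ⟨F^n S⟩. -/
/-!
For `s, t` in the fundamental domain and `m ≥ 1` one has `Hom(s, Σ Fᵐ t) = 0`. Indeed
`Fᵐ t = Σ^w 𝕊 v` with `v = F^{m-1} t`, so by Serre duality this is dual to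
`Hom(v, Σ^{-(w+1)} s)`. Since `t ∈ X` and neither `𝕊` nor `Σ^w` raises cohomological degrees,
`v` lives in degrees `≤ 0`, whereas `s ∈ Σ^w 𝕊 Y` lives in degrees `≥ -w`, so `Σ^{-(w+1)} s`
lives in degrees `≥ 1`; as `mod kQ` is hereditary, there are no maps between them.
The vanishing passes to extension closures, so in every triangle `b → d → a → Σ b` with
`a ∈ ⟨S⟩`, `b ∈ ⟨Fᵐ S⟩` the connecting morphism is zero and `d ≅ a ⊕ b`, which also lies in
`⟨S⟩ * ⟨Fᵐ S⟩`.
-/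

namespace Paper

open CategoryTheory Limits Pretriangulated

section Shift

variable {D : Type*} [Category D] [Preadditive D] [HasShift D ℤ]
  [∀ n : ℤ, (shiftFunctor D n).Additive]

lemma hom_shift_eq_zero_of_hom_shift_neg_eq_zero {a b : D} (m : ℤ)
    (h : ∀ g : a⟦-m⟧ ⟶ b, g = 0) (f : a ⟶ b⟦m⟧) : f = 0 := by
  apply (shiftFunctor D (-m)).map_injective
  rw [Functor.map_zero, ← Preadditive.IsIso.comp_right_eq_zero _
    ((shiftFunctorCompIsoId D m (-m) (add_neg_cancel m)).hom.app b)]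
  exact h _

end Shift

section Pretriangulated

variable {D : Type*} [Category D] [Preadditive D] [HasZeroObject D] [HasShift D ℤ]
  [∀ n : ℤ, (shiftFunctor D n).Additive] [Pretriangulated D]

lemma extClosure_minimal {S A : Set D} (hSA : S ⊆ A) (hA : IsExtClosed A) :
    extClosure S ⊆ A :=
  Set.sInter_subset_of_mem ⟨hSA, hA⟩

lemma isExtClosed_leftPerp (A : Set D) : IsExtClosed (leftPerp A) := by
  refine ⟨fun d hd x _ f => hd.eq_of_src f 0, ?_⟩
  rintro d ⟨u, v, f, g, h, hu, hv, hT⟩ x hx φ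
  obtain ⟨ψ, rfl⟩ := Triangle.yoneda_exact₂ _ hT φ (hu x hx _)
  -- morphisms unpacked from `star` are typed through another (defeq) `Quiver` instance path,
  -- which `rw` and `simp` do not see through; `exact` and `show` re-elaborate the goal
  rw [hv x hx ψ]; exact comp_zero

lemma isExtClosed_setOf_shift_mem_rightPerp (A : Set D) (n : ℤ) :
    IsExtClosed {d : D | d⟦n⟧ ∈ rightPerp A} := by
  refine ⟨fun d hd x _ f => ((shiftFunctor D n).map_isZero hd).eq_of_tgt f 0, ?_⟩
  rintro d ⟨u, v, f, g, h, hu, hv, hT⟩ x hx φ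
  obtain ⟨ψ, rfl⟩ :=
    Triangle.coyoneda_exact₂ _ (Triangle.shift_distinguished _ hT n) φ (hv x hx _)
  rw [hu x hx ψ]; exact zero_comp

lemma hom_shift_eq_zero_of_mem_extClosure {S T : Set D} (n : ℤ)
    (h : ∀ s ∈ S, ∀ t ∈ T, ∀ f : s ⟶ t⟦n⟧, f = 0) {a b : D}
    (ha : a ∈ extClosure S) (hb : b ∈ extClosure T) (f : a ⟶ b⟦n⟧) : f = 0 := by
  have hT : T ⊆ {d : D | d⟦n⟧ ∈ rightPerp (extClosure S)} := fun t ht x hx =>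
    extClosure_minimal (fun s hs _ hz f => by subst hz; exact h s hs t ht f)
      (isExtClosed_leftPerp {t⟦n⟧}) hx _ rfl
  exact extClosure_minimal hT (isExtClosed_setOf_shift_mem_rightPerp _ n) hb a ha f

lemma exists_iso_biprod_of_mem_star {A B : Set D}
    (h : ∀ a ∈ A, ∀ b ∈ B, ∀ f : a ⟶ b⟦(1 : ℤ)⟧, f = 0) {d : D} (hd : d ∈ star B A) :
    ∃ a ∈ A, ∃ b ∈ B, Nonempty (d ≅ a ⊞ b) := by
  obtain ⟨b, a, f, g, δ, hb, ha, hT⟩ := hd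
  obtain rfl := h a ha b hb δ
  obtain ⟨e, -, -⟩ := exists_iso_binaryBiproduct_of_distTriang _ hT rfl
  exact ⟨a, ha, b, hb, ⟨e ≪≫ biprod.braiding b a⟩⟩

lemma mem_star_of_iso {A B : Set D} {d d' : D} (e : d ≅ d') (hd' : d' ∈ star A B) :
    d ∈ star A B := by
  obtain ⟨a, b, f, g, h, ha, hb, hT⟩ := hd'
  refine ⟨a, b, f ≫ e.inv, e.hom ≫ g, h, ha, hb, isomorphic_distinguished _ hT _ ?_⟩
  refine Triangle.isoMk _ _ (Iso.refl a) e (Iso.refl b) ?_ ?_ ?_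
  · show (f ≫ e.inv) ≫ e.hom = 𝟙 a ≫ f
    simp
  · show (e.hom ≫ g) ≫ 𝟙 b = e.hom ≫ g
    simp
  · show h ≫ (shiftFunctor D 1).map (𝟙 a) = 𝟙 b ≫ h
    simp

lemma mem_star_of_iso_biprod {A B : Set D} {a b d : D} (ha : a ∈ A) (hb : b ∈ B)
    (e : d ≅ a ⊞ b) : d ∈ star A B :=
  mem_star_of_iso e ⟨a, b, _, _, _, ha, hb, binaryBiproductTriangle_distinguished a b⟩

end Pretriangulated

namespace HereditarySetup

variable {k : Type*} [Field k] {D : Type*} [Category D] [Preadditive D] [HasZeroObject D]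
  [HasShift D ℤ] [∀ n : ℤ, (shiftFunctor D n).Additive] [Pretriangulated D] [Linear k D]
  [HasFiniteBiproducts D] {n : ℕ} (HS : HereditarySetup k D n)

/-- `d` is a finite direct sum of stalk objects `M[-s]` with `M ∈ H` and `P s`; a summand
`h = M[-s]` is recorded through `h⟦s⟧ ∈ H`. -/
def DegreesIn (P : ℤ → Prop) (d : D) : Prop :=
  ∃ (m : ℕ) (h : Fin m → D),
    (∀ i, IsZero (h i) ∨ ∃ s : ℤ, P s ∧ (h i)⟦s⟧ ∈ heart HS.X HS.Y) ∧ Nonempty (d ≅ ⨁ h)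

variable {HS}

lemma DegreesIn.mono {P Q : ℤ → Prop} {d : D} (hd : HS.DegreesIn P d)
    (hPQ : ∀ s, P s → Q s) : HS.DegreesIn Q d := by
  obtain ⟨m, h, hh, he⟩ := hd
  exact ⟨m, h, fun i => (hh i).imp_right fun ⟨s, hs, hmem⟩ => ⟨s, hPQ s hs, hmem⟩, he⟩

lemma DegreesIn.of_iso {P : ℤ → Prop} {d d' : D} (e : d' ≅ d) (hd : HS.DegreesIn P d) :
    HS.DegreesIn P d' := by
  obtain ⟨m, h, hh, ⟨e'⟩⟩ := hd
  exact ⟨m, h, hh, ⟨e ≪≫ e'⟩⟩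

variable (HS)

lemma mem_X_of_iso {a b : D} (e : a ≅ b) (hb : b ∈ HS.X) : a ∈ HS.X :=
  HS.tstr.retractX e.hom e.inv e.hom_inv_id hb

lemma mem_Y_of_iso {a b : D} (e : a ≅ b) (hb : b ∈ HS.Y) : a ∈ HS.Y :=
  HS.tstr.retractY e.hom e.inv e.hom_inv_id hb

lemma mem_heart_of_iso {a b : D} (e : a ≅ b) (hb : b ∈ heart HS.X HS.Y) :
    a ∈ heart HS.X HS.Y :=
  ⟨HS.mem_X_of_iso e hb.1, HS.mem_Y_of_iso ((shiftFunctor D (-1 : ℤ)).mapIso e) hb.2⟩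

lemma shift_mem_X {x : D} (hx : x ∈ HS.X) {s : ℤ} (hs : 0 ≤ s) : x⟦s⟧ ∈ HS.X := by
  lift s to ℕ using hs
  induction s with
  | zero => exact HS.mem_X_of_iso ((shiftFunctorZero D ℤ).app x) hx
  | succ s ih =>
    exact HS.mem_X_of_iso ((shiftFunctorAdd' D (s : ℤ) 1 _ (by push_cast; ring)).app x)
      (HS.tstr.shiftX _ ih)

lemma isZero_of_mem_X_of_mem_Y {c : D} (hX : c ∈ HS.X) (hY : c ∈ HS.Y) : IsZero c :=
  (IsZero.iff_id_eq_zero c).mpr (HS.tstr.homZero c hX c hY (𝟙 c))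

lemma hom_eq_zero_of_shift_mem_heart {a b : D} {s t : ℤ}
    (ha : a⟦s⟧ ∈ heart HS.X HS.Y) (hb : b⟦t⟧ ∈ heart HS.X HS.Y)
    (h0 : s - t ≠ 0) (h1 : s - t ≠ 1) (f : a ⟶ b) : f = 0 := by
  apply (shiftFunctor D s).map_injective
  rw [Functor.map_zero, ← Preadditive.IsIso.comp_right_eq_zero _
    ((shiftFunctorAdd' D t (s - t) s (by ring)).hom.app b)]
  exact HS.hereditary _ ha _ hb (s - t) h0 h1 _

variable {HS}

lemma DegreesIn.hom_eq_zero_of_shift_mem_heart {P : ℤ → Prop} {d c : D}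
    (hd : HS.DegreesIn P d) {s : ℤ} (hc : c⟦s⟧ ∈ heart HS.X HS.Y)
    (hP : ∀ t, P t → t - s ≠ 0 ∧ t - s ≠ 1) (f : d ⟶ c) : f = 0 := by
  obtain ⟨m, h, hh, ⟨e⟩⟩ := hd
  rw [← Preadditive.IsIso.comp_left_eq_zero e.inv]
  refine biproduct.hom_ext' _ _ fun i => ?_
  rw [comp_zero]
  rcases hh i with hzero | ⟨t, ht, hmem⟩
  · exact hzero.eq_of_src _ _
  · exact HS.hom_eq_zero_of_shift_mem_heart hmem hc (hP t ht).1 (hP t ht).2 _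

lemma DegreesIn.hom_eq_zero {P Q : ℤ → Prop} {d d' : D}
    (hd : HS.DegreesIn P d) (hd' : HS.DegreesIn Q d')
    (hPQ : ∀ s t, P s → Q t → s - t ≠ 0 ∧ s - t ≠ 1) (f : d ⟶ d') : f = 0 := by
  obtain ⟨m, h, hh, ⟨e⟩⟩ := hd'
  rw [← Preadditive.IsIso.comp_right_eq_zero f e.hom]
  refine biproduct.hom_ext _ _ fun j => ?_
  rw [zero_comp, Category.assoc]
  rcases hh j with hzero | ⟨t, ht, hmem⟩
  · exact hzero.eq_of_tgt _ _
  · exact hd.hom_eq_zero_of_shift_mem_heart hmem (fun s hs => hPQ s t hs ht) _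

variable (HS)

lemma degreesIn_of_forall_retract {P : ℤ → Prop} {d : D}
    (hd : ∀ (c : D) (s : ℤ), c⟦s⟧ ∈ heart HS.X HS.Y → ∀ (ι : c ⟶ d) (π : d ⟶ c),
      ι ≫ π = 𝟙 c → IsZero c ∨ P s) : HS.DegreesIn P d := by
  obtain ⟨m, h, hs, ⟨e⟩⟩ := HS.splitting d
  refine ⟨m, h, fun i => ?_, ⟨e⟩⟩
  obtain ⟨s, hsi⟩ := hs i
  exact (hd (h i) s hsi (biproduct.ι h i ≫ e.inv) (e.hom ≫ biproduct.π h i) (by simp)).imp_right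
    fun hP => ⟨s, hP, hsi⟩

lemma degreesIn_of_mem_X {x : D} (hx : x ∈ HS.X) : HS.DegreesIn (· ≤ 0) x := by
  refine HS.degreesIn_of_forall_retract fun c s hc ι π hιπ => ?_
  refine or_iff_not_imp_right.mpr fun hs => ?_
  have hcX : c ∈ HS.X := HS.tstr.retractX ι π hιπ hx
  have hY : c⟦s - 1⟧ ∈ HS.Y :=
    HS.mem_Y_of_iso ((shiftFunctorAdd' D s (-1) (s - 1) (by ring)).app c) hc.2
  have hX : c⟦s - 1⟧ ∈ HS.X := HS.shift_mem_X hcX (by omega)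
  exact IsZero.of_full_of_faithful_of_isZero (shiftFunctor D (s - 1)) c
    (HS.isZero_of_mem_X_of_mem_Y hX hY)

lemma degreesIn_of_mem_Y {y : D} (hy : y ∈ HS.Y) : HS.DegreesIn (1 ≤ ·) y := by
  refine HS.degreesIn_of_forall_retract fun c s hc ι π hιπ => ?_
  refine or_iff_not_imp_right.mpr fun hs => ?_
  have hcX : c ∈ HS.X :=
    HS.mem_X_of_iso (((shiftFunctorZero D ℤ).app c).symm ≪≫
      (shiftFunctorAdd' D s (-s) 0 (by ring)).app c) (HS.shift_mem_X hc.1 (by omega))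
  exact HS.isZero_of_mem_X_of_mem_Y hcX (HS.tstr.retractY ι π hιπ hy)

variable {HS}

lemma DegreesIn.shift {P : ℤ → Prop} {x : D} (hx : HS.DegreesIn P x) (m : ℤ) :
    HS.DegreesIn (fun s => P (s + m)) (x⟦m⟧) := by
  obtain ⟨r, h, hh, ⟨e⟩⟩ := hx
  refine ⟨r, fun i => (h i)⟦m⟧, fun i => ?_,
    ⟨(shiftFunctor D m).mapIso e ≪≫ (shiftFunctor D m).mapBiproduct h⟩⟩
  rcases hh i with hzero | ⟨t, ht, hmem⟩
  · exact Or.inl ((shiftFunctor D m).map_isZero hzero)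
  · refine Or.inr ⟨t - m, by simpa using ht, ?_⟩
    exact HS.mem_heart_of_iso ((shiftFunctorAdd' D m (t - m) t (by ring)).app (h i)).symm hmem

variable (HS)

lemma hom_serreF_eq_zero {x y : D} (h : ∀ f : x ⟶ y, f = 0) (g : y ⟶ HS.serreF.obj x) :
    g = 0 := by
  refine (Module.forall_dual_apply_eq_zero_iff k g).mp fun φ => ?_
  obtain ⟨f, hf, -⟩ := HS.serre_duality x y φ
  rw [← hf g, h f, zero_comp, map_zero]

variable {HS}

lemma DegreesIn.serreF {P : ℤ → Prop} {x : D} (hx : HS.DegreesIn P x) :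
    HS.DegreesIn (fun s => P s ∨ P (s + 1)) (HS.serreF.obj x) := by
  refine HS.degreesIn_of_forall_retract fun c s hc ι π hιπ => ?_
  refine or_iff_not_imp_right.mpr fun hs => ?_
  have hι : ι = 0 := HS.hom_serreF_eq_zero (hx.hom_eq_zero_of_shift_mem_heart hc
    fun t ht => ⟨fun h => hs (.inl (by rwa [show s = t by omega])),
      fun h => hs (.inr (by rwa [show s + 1 = t by omega]))⟩) ι
  rw [IsZero.iff_id_eq_zero, ← hιπ, hι, zero_comp]

lemma degreesIn_of_mem_fd {w : ℕ} {d : D} (hd : d ∈ HS.fd w) :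
    HS.DegreesIn (-(w : ℤ) ≤ ·) d := by
  obtain ⟨-, y, hy, ⟨e⟩⟩ := hd
  exact (((HS.degreesIn_of_mem_Y hy).serreF.shift w).mono fun s hs => by omega).of_iso e

lemma degreesIn_nonpos_obj_pow {w : ℕ} (FP : FPowData HS w) {t : D}
    (ht : HS.DegreesIn (· ≤ 0) t) (ℓ : ℕ) : HS.DegreesIn (· ≤ 0) ((FP.pow ℓ).obj t) := by
  induction ℓ with
  | zero => exact ht.of_iso (FP.pow_zero.app t)
  | succ ℓ ih =>
    rw [Nat.cast_succ]
    exact ((ih.serreF.shift w).mono fun s hs => by omega).of_iso ((FP.pow_succ ℓ).app t)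

lemma hom_shift_obj_pow_eq_zero {w : ℕ} (FP : FPowData HS w) {s t : D}
    (hs : s ∈ HS.fd w) (ht : t ∈ HS.fd w) {m : ℤ} (hm : 1 ≤ m)
    (f : s ⟶ ((FP.pow m).obj t)⟦(1 : ℤ)⟧) : f = 0 := by
  obtain ⟨ℓ, rfl⟩ : ∃ ℓ : ℕ, m = ℓ + 1 := ⟨(m - 1).toNat, by omega⟩
  set v := (FP.pow ℓ).obj t
  have hv : ∀ g : v ⟶ s⟦-((w : ℤ) + 1)⟧, g = 0 :=
    (HS.degreesIn_nonpos_obj_pow FP (HS.degreesIn_of_mem_X ht.1) ℓ).hom_eq_zero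
      ((HS.degreesIn_of_mem_fd hs).shift _) fun a b ha hb => ⟨by omega, by omega⟩
  have E : ((FP.pow (ℓ + 1)).obj t)⟦(1 : ℤ)⟧ ≅ (HS.serreF.obj v)⟦(w : ℤ) + 1⟧ :=
    (shiftFunctor D (1 : ℤ)).mapIso ((FP.pow_succ ℓ).app t) ≪≫
      ((shiftFunctorAdd' D (w : ℤ) 1 _ rfl).app _).symm
  rw [← Preadditive.IsIso.comp_right_eq_zero f E.hom]
  exact hom_shift_eq_zero_of_hom_shift_neg_eq_zero _ (HS.hom_serreF_eq_zero hv) _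

end HereditarySetup

end Paper

namespace Paper

open CategoryTheory Limits Pretriangulated Opposite

universe w v u

variable {k : Type w} [Field k] [IsAlgClosed k]
variable {D : Type u} [Category.{v} D] [Preadditive D] [HasZeroObject D]
  [HasShift D ℤ] [∀ n : ℤ, (CategoryTheory.shiftFunctor D n).Additive] [Pretriangulated D]
  [CategoryTheory.Linear k D] [HasFiniteBiproducts D]

theorem statement_8_general {n : ℕ} (HS : HereditarySetup k D n) (w : ℕ)
    (FP : FPowData HS w)
    (S : Set D) (hSfd : S ⊆ HS.fd w)
    (m : ℤ) (hm : 1 ≤ m) :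
    star (extClosure (powImage FP.pow S m)) (extClosure S) ⊆
      star (extClosure S) (extClosure (powImage FP.pow S m)) ∧
    ∀ d ∈ star (extClosure (powImage FP.pow S m)) (extClosure S),
      ∃ a ∈ extClosure S, ∃ b ∈ extClosure (powImage FP.pow S m),
        Nonempty (d ≅ a ⊞ b) := by
  have hvanish : ∀ a ∈ extClosure S, ∀ b ∈ extClosure (powImage FP.pow S m),
      ∀ f : a ⟶ b⟦(1 : ℤ)⟧, f = 0 := by
    refine fun a ha b hb => hom_shift_eq_zero_of_mem_extClosure 1 ?_ ha hb
    rintro s hs _ ⟨t, ht, rfl⟩ f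
    exact HS.hom_shift_obj_pow_eq_zero FP (hSfd hs) (hSfd ht) hm f
  refine ⟨fun d hd => ?_, fun d => exists_iso_biprod_of_mem_star hvanish⟩
  obtain ⟨a, ha, b, hb, ⟨e⟩⟩ := exists_iso_biprod_of_mem_star hvanish hd
  exact mem_star_of_iso_biprod ha hb e

/-- Corollary 4.3 of the paper. -/
theorem statement_8 {n : ℕ} (HS : HereditarySetup k D n) (w : ℕ) (hw : 1 ≤ w)
    (FP : FPowData HS w)
    (S : Set D) (hS : IsInfOrthogonal k S) (hSfd : S ⊆ HS.fd w)
    (m : ℤ) (hm : 1 ≤ m) :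
    star (extClosure (powImage FP.pow S m)) (extClosure S) ⊆
      star (extClosure S) (extClosure (powImage FP.pow S m)) ∧
    ∀ d ∈ star (extClosure (powImage FP.pow S m)) (extClosure S),
      ∃ a ∈ extClosure S, ∃ b ∈ extClosure (powImage FP.pow S m),
        Nonempty (d ≅ a ⊞ b) :=
  statement_8_general HS w FP S hSfd m hm

end Paper
end
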